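/- Algebraic core of Proposition 2.9: Let n ≥ 1, ħ ∈ ℂ with ħ ≠ 0, and y₁,…,yₙ, u₁,…,uₙ ∈ ℂ with uᵢ ≠ 0 for all i and (yᵢ−yⱼ)² ≠ (ħ²/4)(uᵢ+uⱼ)² for all i ≠ j. For a nonempty subset B of {1,…,n}, call a bijection σ : B → B cyclic if it acts transitively on B (the identity if |B| = 1). Then ∏_{i=1}^{n} 1/(ħuᵢ) · ∏_{1≤i<j≤n} [((yᵢ−yⱼ)² − (ħ²/4)(uᵢ−uⱼ)²)] / [((yᵢ−yⱼ)² − (ħ²/4)(uᵢ+uⱼ)²)] = ∑_π ∏_{B ∈ π} [ (−1)^{|B|−1} · ∑_{σ cyclic on B} ∏_{i ∈ B} 1/(yᵢ − y_{σ(i)} + (ħ/2)(uᵢ + u_{σ(i)})) ], where the outer sum runs over all set partitions π of {1,…,n}. -/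

import Mathlib

/-!
With `x i = y i + ℏ u i / 2` and `b j = -y j + ℏ u j / 2`, the summand on the right is built from
the Cauchy matrix `(x i + b j)⁻¹`, and the left side is the closed form of its determinant, since
`x i + b i = ℏ u i` and the products over pairs `i < j` regroup into the displayed quotients.
The right side is the Leibniz expansion of the same determinant, with each permutation recorded
as the partition into its orbits together with the transitive permutation it induces on each
block; a transitive permutation of a block `B` has sign `(-1) ^ (|B| - 1)`.

The Cauchy determinant itself comes from `∏_{k ≠ j} (x i + b k) = ∑_r c r j * x i ^ r`: the
matrix on the left is a Vandermonde matrix in `x` times a coefficient matrix independent of `x`,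
whose determinant is read off at `x = -b`, where the left side becomes diagonal.
-/

open scoped Classical

open Finset Equiv Equiv.Perm

theorem Equiv.Perm.sign_of_forall_sameCycle {β : Type*} [Fintype β] [DecidableEq β] [Nonempty β]
    {τ : Perm β} (h : ∀ i j, τ.SameCycle i j) : sign τ = (-1) ^ (Fintype.card β - 1) := by
  obtain ⟨c, hc⟩ := Nat.exists_eq_add_of_lt (Fintype.card_pos (α := β))
  rcases subsingleton_or_nontrivial β with hβ | hβ
  · have hcard : Fintype.card β = 1 :=
      (Fintype.card_le_one_iff_subsingleton.mpr hβ).antisymm Fintype.card_pos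
    simp [Subsingleton.elim τ 1, hcard]
  have hmoved : ∀ x, τ x ≠ x := fun x hx =>
    let ⟨y, hy⟩ := exists_ne x
    hy ((h x y).eq_of_left hx).symm
  have hcycle : τ.IsCycle := ⟨Classical.arbitrary β, hmoved _, fun y _ => h _ y⟩
  have hsupport : τ.support = univ := eq_univ_of_forall fun x => mem_support.mpr (hmoved x)
  rw [hcycle.sign, hsupport, card_univ, hc]
  simp [pow_succ]

theorem Equiv.Perm.forall_exists_pow_eq_iff_forall_sameCycle {β : Type*} [Finite β] {τ : Perm β} :
    (∀ i j, ∃ k : ℕ, (τ ^ k) i = j) ↔ ∀ i j, τ.SameCycle i j :=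
  ⟨fun h i j => let ⟨k, hk⟩ := h i j; ⟨k, by rwa [zpow_natCast]⟩,
    fun h i j => (h i j).exists_nat_pow_eq⟩

variable {α : Type*}

def IsSetPartition (π : Finset (Finset α)) : Prop :=
  (∀ B ∈ π, B.Nonempty) ∧ ∀ i, ∃! B, B ∈ π ∧ i ∈ B

namespace IsSetPartition

variable {π : Finset (Finset α)}

theorem exists_mem (hπ : IsSetPartition π) (i : α) : ∃ B ∈ π, i ∈ B :=
  let ⟨B, hB, _⟩ := hπ.2 i; ⟨B, hB⟩

theorem pairwiseDisjoint (hπ : IsSetPartition π) : (π : Set (Finset α)).PairwiseDisjoint id :=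
  fun _ hB _ hC hBC => disjoint_left.mpr fun i hiB hiC =>
    hBC ((hπ.2 i).unique ⟨hB, hiB⟩ ⟨hC, hiC⟩)

theorem biUnion_eq_univ [Fintype α] [DecidableEq α] (hπ : IsSetPartition π) :
    π.biUnion id = univ :=
  eq_univ_of_forall fun i => mem_biUnion.mpr (hπ.exists_mem i)

end IsSetPartition

theorem Finpartition.isSetPartition_parts [Fintype α] [DecidableEq α]
    (P : Finpartition (univ : Finset α)) :
    IsSetPartition P.parts :=
  ⟨fun _ => P.nonempty_of_mem_parts, fun _ => P.existsUnique_mem (mem_univ _)⟩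

section OfBlocks

variable [DecidableEq α] {π : Finset (Finset α)}

theorem pairwise_commute_ofSubtype (hπ : (π : Set (Finset α)).PairwiseDisjoint id)
    (f : ∀ B ∈ π, Perm B) :
    (π.attach : Set {B // B ∈ π}).Pairwise
      (Function.onFun Commute fun B => ofSubtype (f B.1 B.2)) :=
  fun B _ C _ hBC => Disjoint.commute fun x => by
    by_cases hx : x ∈ B.1
    · exact .inr (ofSubtype_apply_of_not_mem _
        (disjoint_left.mp (hπ B.2 C.2 (Subtype.coe_injective.ne hBC)) hx))
    · exact .inl (ofSubtype_apply_of_not_mem _ hx)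

variable (hπ : (π : Set (Finset α)).PairwiseDisjoint id) (f : ∀ B ∈ π, Perm B)

def ofBlocks : Perm α :=
  π.attach.noncommProd (fun B => ofSubtype (f B.1 B.2)) (pairwise_commute_ofSubtype hπ f)

variable {hπ f}

theorem ofBlocks_apply {B : Finset α} (hB : B ∈ π) {i : α} (hi : i ∈ B) :
    ofBlocks hπ f i = f B hB ⟨i, hi⟩ := by
  rw [ofBlocks, ← noncommProd_erase_mul _ (mem_attach π ⟨B, hB⟩), Perm.mul_apply,
    ofSubtype_apply_of_mem _ hi]
  refine noncommProd_induction _ _ _ (fun g : Perm α => g _ = _) (fun g h hg hh => ?_) rfl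
    fun C hC => ofSubtype_apply_of_not_mem _ ?_
  · rw [Perm.mul_apply, hh, hg]
  · exact disjoint_left.mp (hπ hB C.2 fun h => (mem_erase.mp hC).1 (Subtype.ext h).symm)
      (f B hB ⟨i, hi⟩).2

theorem ofBlocks_pow_apply {B : Finset α} (hB : B ∈ π) {i : α} (hi : i ∈ B) (k : ℕ) :
    (ofBlocks hπ f ^ k) i = (f B hB ^ k) ⟨i, hi⟩ := by
  induction k with
  | zero => rfl
  | succ k ih =>
    rw [pow_succ', Perm.mul_apply, ih, ofBlocks_apply hB (Subtype.prop _), pow_succ',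
      Perm.mul_apply]

theorem sign_ofBlocks [Fintype α] : sign (ofBlocks hπ f) = ∏ B ∈ π.attach, sign (f B.1 B.2) := by
  rw [ofBlocks, map_noncommProd]
  simp only [sign_ofSubtype]
  exact noncommProd_eq_prod _ _

end OfBlocks

section CycleParts

variable [Fintype α] [DecidableEq α]

noncomputable def cycleParts (σ : Perm α) : Finpartition (univ : Finset α) :=
  Finpartition.ofSetoid (SameCycle.setoid σ)

theorem mem_part_cycleParts {σ : Perm α} {i j : α} :
    j ∈ (cycleParts σ).part i ↔ σ.SameCycle i j :=
  Finpartition.mem_part_ofSetoid_iff_rel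

theorem apply_mem_iff_of_mem_cycleParts {σ : Perm α} {B : Finset α}
    (hB : B ∈ (cycleParts σ).parts) (x : α) : σ x ∈ B ↔ x ∈ B := by
  obtain ⟨a, ha⟩ := (cycleParts σ).nonempty_of_mem_parts hB
  rw [← (cycleParts σ).part_eq_of_mem hB ha, mem_part_cycleParts, mem_part_cycleParts,
    sameCycle_apply_right]

def cycleRestriction (σ : Perm α) (B : Finset α) (hB : B ∈ (cycleParts σ).parts) : Perm B :=
  σ.subtypePerm (apply_mem_iff_of_mem_cycleParts hB)

theorem cycleRestriction_sameCycle {σ : Perm α} {B : Finset α} (hB : B ∈ (cycleParts σ).parts)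
    (x y : B) : (cycleRestriction σ B hB).SameCycle x y := by
  obtain ⟨a, ha⟩ := (cycleParts σ).nonempty_of_mem_parts hB
  have hpart := (cycleParts σ).part_eq_of_mem hB ha
  have hx : σ.SameCycle a x := mem_part_cycleParts.mp (hpart ▸ x.2)
  have hy : σ.SameCycle a y := mem_part_cycleParts.mp (hpart ▸ y.2)
  exact sameCycle_subtypePerm.mpr (hx.symm.trans hy)

theorem ofBlocks_cycleRestriction (σ : Perm α) :
    ofBlocks (cycleParts σ).isSetPartition_parts.pairwiseDisjoint (cycleRestriction σ) = σ :=
  Equiv.ext fun i => ofBlocks_apply ((cycleParts σ).part_mem.mpr (mem_univ i))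
    ((cycleParts σ).mem_part (mem_univ i))

variable {π : Finset (Finset α)} {f : ∀ B ∈ π, Perm B}

theorem part_cycleParts_ofBlocks (hπ : IsSetPartition π)
    (hf : ∀ B hB, ∀ x y, (f B hB).SameCycle x y)
    {B : Finset α} (hB : B ∈ π) {i : α} (hi : i ∈ B) :
    (cycleParts (ofBlocks hπ.pairwiseDisjoint f)).part i = B := by
  ext j
  rw [mem_part_cycleParts]
  constructor
  · intro h
    obtain ⟨k, rfl⟩ := h.exists_nat_pow_eq
    rw [ofBlocks_pow_apply hB hi]
    exact Subtype.prop _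
  · intro hj
    obtain ⟨k, hk⟩ := (hf B hB ⟨i, hi⟩ ⟨j, hj⟩).exists_nat_pow_eq
    exact ⟨k, by rw [zpow_natCast, ofBlocks_pow_apply hB hi, hk]⟩

theorem cycleParts_ofBlocks (hπ : IsSetPartition π) (hf : ∀ B hB, ∀ x y, (f B hB).SameCycle x y) :
    (cycleParts (ofBlocks hπ.pairwiseDisjoint f)).parts = π := by
  ext C
  constructor
  · intro hC
    obtain ⟨i, hi⟩ := Finpartition.nonempty_of_mem_parts _ hC
    obtain ⟨B, hB, hiB⟩ := hπ.exists_mem i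
    rwa [← Finpartition.part_eq_of_mem _ hC hi, part_cycleParts_ofBlocks hπ hf hB hiB]
  · intro hC
    obtain ⟨i, hi⟩ := hπ.1 C hC
    rw [← part_cycleParts_ofBlocks hπ hf hC hi]
    exact (cycleParts _).part_mem.mpr (mem_univ i)

theorem cycleRestriction_ofBlocks (hπ : (π : Set (Finset α)).PairwiseDisjoint id) {B : Finset α}
    (hB : B ∈ π) (hB' : B ∈ (cycleParts (ofBlocks hπ f)).parts) :
    cycleRestriction (ofBlocks hπ f) B hB' = f B hB :=
  Equiv.ext fun x => Subtype.ext (ofBlocks_apply hB x.2)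

theorem prod_apply_ofBlocks {M : Type*} [CommMonoid M] (hπ : IsSetPartition π) (g : α → α → M) :
    ∏ i, g i (ofBlocks hπ.pairwiseDisjoint f i) = ∏ B ∈ π.attach, ∏ i : B.1, g i (f B.1 B.2 i) := by
  rw [← hπ.biUnion_eq_univ, prod_biUnion hπ.pairwiseDisjoint, ← prod_attach]
  refine prod_congr rfl fun B _ => ?_
  rw [← prod_coe_sort]
  exact prod_congr rfl fun i _ => congrArg (g i) (ofBlocks_apply B.2 i.2)

theorem sign_mul_prod_ofBlocks {R : Type*} [CommRing R] (hπ : IsSetPartition π)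
    (hf : ∀ B hB, ∀ x y, (f B hB).SameCycle x y) (M : α → α → R) :
    ((sign (ofBlocks hπ.pairwiseDisjoint f) : ℤ) : R) *
        ∏ i, M i (ofBlocks hπ.pairwiseDisjoint f i) =
      ∏ B ∈ π.attach, ((-1 : R) ^ (#B.1 - 1) * ∏ i : B.1, M i (f B.1 B.2 i)) := by
  rw [prod_mul_distrib, prod_apply_ofBlocks hπ, sign_ofBlocks]
  push_cast
  congr 1
  refine prod_congr rfl fun B _ => ?_
  have := (hπ.1 B.1 B.2).to_subtype
  rw [sign_of_forall_sameCycle (hf B.1 B.2), Fintype.card_coe]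
  simp

end CycleParts

theorem sigma_mk_eq_of_forall_eq {π₁ π₂ : Finset (Finset α)} (h : π₁ = π₂)
    {f₁ : ∀ B ∈ π₁, Perm B} {f₂ : ∀ B ∈ π₂, Perm B} (hf : ∀ B h₁ h₂, f₁ B h₁ = f₂ B h₂) :
    (⟨π₁, f₁⟩ : Σ π : Finset (Finset α), ∀ B ∈ π, Perm B) = ⟨π₂, f₂⟩ := by
  subst h
  congr
  exact funext₂ fun B hB => hf B hB hB

theorem Matrix.det_eq_sum_setPartitions_prod_cycles [Fintype α] [DecidableEq α] {R : Type*}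
    [CommRing R] (M : α → α → R) :
    (Matrix.of M).det = ∑ π ∈ univ.filter (fun π : Finset (Finset α) =>
          (∀ B ∈ π, B.Nonempty) ∧ ∀ i : α, ∃! B, B ∈ π ∧ i ∈ B),
        ∏ B ∈ π, ((-1 : R) ^ (B.card - 1) *
          ∑ σ ∈ univ.filter (fun σ : Perm {x // x ∈ B} =>
              ∀ i j : {x // x ∈ B}, ∃ k : ℕ, (σ ^ k) i = j),
            ∏ i : {x // x ∈ B}, M i.1 (σ i)) := by
  set cyc : ∀ B : Finset α, Finset (Perm B) := fun B =>
    univ.filter fun σ => ∀ i j, ∃ k : ℕ, (σ ^ k) i = j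
  have mem_cyc {B : Finset α} {σ : Perm B} : σ ∈ cyc B ↔ ∀ i j, σ.SameCycle i j := by
    simp only [cyc, mem_filter, mem_univ, true_and, forall_exists_pow_eq_iff_forall_sameCycle]
  set P := univ.filter fun π : Finset (Finset α) =>
    (∀ B ∈ π, B.Nonempty) ∧ ∀ i : α, ∃! B, B ∈ π ∧ i ∈ B
  have mem_sigma_pi {p : Σ π : Finset (Finset α), ∀ B ∈ π, Perm B}
      (hp : p ∈ P.sigma fun π => π.pi cyc) :
      IsSetPartition p.1 ∧ ∀ B hB, ∀ x y, (p.2 B hB).SameCycle x y :=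
    ⟨(mem_filter.mp (mem_sigma.mp hp).1).2,
      fun B hB => mem_cyc.mp (mem_pi.mp (mem_sigma.mp hp).2 B hB)⟩
  have hexpand (π : Finset (Finset α)) :
      ∏ B ∈ π, ((-1 : R) ^ (#B - 1) * ∑ σ ∈ cyc B, ∏ i : B, M i (σ i)) =
        ∑ f ∈ π.pi cyc, ∏ B ∈ π.attach, ((-1 : R) ^ (#B.1 - 1) * ∏ i : B.1, M i (f B.1 B.2 i)) := by
    simp_rw [mul_sum]
    exact prod_sum _ _ _
  rw [← det_transpose, det_apply', sum_congr rfl fun π _ => hexpand π, sum_sigma']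
  simp only [transpose_apply, of_apply]
  symm
  refine sum_bij' (fun p hp => ofBlocks (mem_sigma_pi hp).1.pairwiseDisjoint p.2)
    (fun σ _ => ⟨(cycleParts σ).parts, cycleRestriction σ⟩) (fun _ _ => mem_univ _) ?_ ?_
    (fun σ _ => ofBlocks_cycleRestriction σ) ?_
  · intro σ _
    exact mem_sigma.mpr ⟨mem_filter.mpr ⟨mem_univ _, (cycleParts σ).isSetPartition_parts⟩,
      mem_pi.mpr fun B hB => mem_cyc.mpr (cycleRestriction_sameCycle hB)⟩
  · rintro ⟨π, f⟩ hp
    obtain ⟨hπ, hf⟩ := mem_sigma_pi hp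
    exact sigma_mk_eq_of_forall_eq (cycleParts_ofBlocks hπ hf)
      fun B h₁ h₂ => cycleRestriction_ofBlocks _ h₂ h₁
  · rintro ⟨π, f⟩ hp
    obtain ⟨hπ, hf⟩ := mem_sigma_pi hp
    exact (sign_mul_prod_ofBlocks hπ hf M).symm

section Cauchy

open Polynomial Matrix Function

theorem Finset.prod_prod_compl_singleton {ι M : Type*} [Fintype ι] [LinearOrder ι]
    [LocallyFiniteOrderTop ι] [LocallyFiniteOrderBot ι] [CommMonoid M] (g : ι → ι → M) :
    ∏ i, ∏ j ∈ {i}ᶜ, g i j = ∏ i, ∏ j ∈ Ioi i, g i j * g j i := by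
  simp_rw [← Ioi_disjUnion_Iio, prod_disjUnion, prod_mul_distrib]
  congr 1
  exact prod_comm' fun i j => by simp

theorem Finset.prod_prod_eq_prod_diag_mul {ι M : Type*} [Fintype ι] [LinearOrder ι]
    [LocallyFiniteOrderTop ι] [LocallyFiniteOrderBot ι] [CommMonoid M] (g : ι → ι → M) :
    ∏ i, ∏ j, g i j = (∏ i, g i i) * ∏ i, ∏ j ∈ Ioi i, g i j * g j i := by
  rw [← prod_prod_compl_singleton, ← prod_mul_distrib]
  exact prod_congr rfl fun i _ => Fintype.prod_eq_mul_prod_compl i _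

variable {m : ℕ}

theorem Matrix.of_eval_eq_vandermonde_mul_of_coeff {R : Type*} [CommRing R] (v : Fin m → R)
    (p : Fin m → R[X]) (hp : ∀ j, (p j).natDegree < m) :
    of (fun i j => (p j).eval (v i)) = vandermonde v * of (fun (r j : Fin m) => (p j).coeff r) := by
  ext i j
  rw [mul_apply, of_apply, eval_eq_sum_range' (hp j), ← Fin.sum_univ_eq_sum_range]
  simp [vandermonde_apply, mul_comm]

theorem Matrix.det_of_prod_compl_add {K : Type*} [Field K] (x b : Fin m → K) (hb : Injective b) :
    (of fun i j => ∏ k ∈ {j}ᶜ, (x i + b k)).det = ∏ i, ∏ j ∈ Ioi i, (x j - x i) * (b j - b i) := by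
  set p : Fin m → K[X] := fun j => ∏ k ∈ {j}ᶜ, (X - C (-b k))
  set coeffs : Matrix (Fin m) (Fin m) K := of fun r j => (p j).coeff r
  have hdeg (j : Fin m) : (p j).natDegree < m := by
    simp only [p, natDegree_finsetProd_X_sub_C_eq_card, card_compl, card_singleton,
      Fintype.card_fin]
    exact Nat.sub_lt j.pos one_pos
  have hfactor (v : Fin m → K) :
      (of fun i j => ∏ k ∈ {j}ᶜ, (v i + b k)).det = (vandermonde v).det * coeffs.det := by
    rw [← det_mul, ← of_eval_eq_vandermonde_mul_of_coeff v p hdeg]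
    simp [p, eval_prod]
  have hdiag : (of fun i j => ∏ k ∈ {j}ᶜ, (-b i + b k)).det = ∏ j, ∏ k ∈ {j}ᶜ, (b k - b j) := by
    rw [← det_diagonal]
    congr 1
    ext i j
    rcases eq_or_ne i j with rfl | hij
    · simp [neg_add_eq_sub]
    · rw [of_apply, diagonal_apply_ne _ hij]
      exact prod_eq_zero (mem_compl.mpr (by simpa using hij)) (neg_add_cancel _)
  have hcoeffs : coeffs.det = ∏ i, ∏ j ∈ Ioi i, (b j - b i) := by
    have key := hfactor fun i => -b i
    rw [hdiag, prod_prod_compl_singleton, det_vandermonde] at key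
    simp only [neg_sub_neg, prod_mul_distrib] at key
    refine mul_left_cancel₀ ?_ (key.symm.trans (mul_comm _ _))
    exact prod_ne_zero_iff.mpr fun i _ => prod_ne_zero_iff.mpr fun j hj =>
      sub_ne_zero.mpr (hb.ne (mem_Ioi.mp hj).ne)
  rw [hfactor, hcoeffs, det_vandermonde, ← prod_mul_distrib]
  exact prod_congr rfl fun i _ => prod_mul_distrib.symm

theorem Matrix.det_cauchy {K : Type*} [Field K] (x b : Fin m → K) (h : ∀ i j, x i + b j ≠ 0) :
    (of fun i j => (x i + b j)⁻¹).det =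
      (∏ i, ∏ j ∈ Ioi i, (x j - x i) * (b j - b i)) / ∏ i, ∏ j, (x i + b j) := by
  by_cases hb : Injective b
  · rw [eq_div_iff (prod_ne_zero_iff.mpr fun i _ => prod_ne_zero_iff.mpr fun j _ => h i j),
      ← det_of_prod_compl_add x b hb, mul_comm, ← det_diagonal, ← det_mul]
    congr 1
    ext i j
    rw [diagonal_mul, of_apply, of_apply, Fintype.prod_eq_mul_prod_compl j, mul_comm (x i + b j),
      mul_assoc, mul_inv_cancel₀ (h i j), mul_one]
  · obtain ⟨i, j, hij, hbij⟩ : ∃ i j, i < j ∧ b i = b j := by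
      simp only [Injective, not_forall] at hb
      obtain ⟨i, j, hbij, hne⟩ := hb
      rcases lt_or_gt_of_ne hne with hlt | hlt
      exacts [⟨i, j, hlt, hbij⟩, ⟨j, i, hlt, hbij.symm⟩]
    rw [det_zero_of_column_eq hij.ne (fun k => by simp [hbij]), eq_comm, div_eq_zero_iff]
    exact .inl (prod_eq_zero (mem_univ i) (prod_eq_zero (mem_Ioi.mpr hij) (by simp [hbij])))

end Cauchy

theorem det_inv_sub_add_mul_add {n : ℕ} {ℏ : ℂ} (hℏ : ℏ ≠ 0) {y u : Fin n → ℂ}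
    (hu : ∀ i, u i ≠ 0)
    (hy : ∀ i j : Fin n, i ≠ j → (y i - y j) ^ 2 ≠ (ℏ ^ 2 / 4) * (u i + u j) ^ 2) :
    (Matrix.of fun i j => (y i - y j + ℏ / 2 * (u i + u j))⁻¹).det =
      (∏ i : Fin n, (ℏ * u i)⁻¹) *
        ∏ i : Fin n, ∏ j ∈ Ioi i,
          ((y i - y j) ^ 2 - (ℏ ^ 2 / 4) * (u i - u j) ^ 2) /
            ((y i - y j) ^ 2 - (ℏ ^ 2 / 4) * (u i + u j) ^ 2) := by
  set x : Fin n → ℂ := fun i => y i + ℏ / 2 * u i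
  set b : Fin n → ℂ := fun j => -y j + ℏ / 2 * u j
  have hentry (i j : Fin n) : y i - y j + ℏ / 2 * (u i + u j) = x i + b j := by ring
  have hxb (i j : Fin n) : x i + b j ≠ 0 := by
    rw [← hentry]
    intro hzero
    rcases eq_or_ne i j with rfl | hij
    · exact mul_ne_zero hℏ (hu i) (by linear_combination hzero)
    · exact hy i j hij (by linear_combination (y i - y j - ℏ / 2 * (u i + u j)) * hzero)
  have hdiag (i : Fin n) : x i + b i = ℏ * u i := by ring
  have hnum (i j : Fin n) : (x j - x i) * (b j - b i) =
      -((y i - y j) ^ 2 - ℏ ^ 2 / 4 * (u i - u j) ^ 2) := by ring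
  have hden (i j : Fin n) : (x i + b j) * (x j + b i) =
      -((y i - y j) ^ 2 - ℏ ^ 2 / 4 * (u i + u j) ^ 2) := by ring
  simp only [hentry, Matrix.det_cauchy x b hxb, prod_prod_eq_prod_diag_mul, hdiag, hnum, hden]
  rw [mul_comm (∏ i, ℏ * u i), ← div_div, div_eq_inv_mul _ (∏ i, ℏ * u i), prod_inv_distrib]
  simp only [← prod_div_distrib, neg_div_neg_eq]

theorem xy_duality_cauchy_partition_identity_general (n : ℕ) (ℏ : ℂ) (hℏ : ℏ ≠ 0)
    (y u : Fin n → ℂ) (hu : ∀ i, u i ≠ 0)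
    (hy : ∀ i j : Fin n, i ≠ j → (y i - y j) ^ 2 ≠ (ℏ ^ 2 / 4) * (u i + u j) ^ 2) :
    (∏ i : Fin n, (ℏ * u i)⁻¹) *
        (∏ i : Fin n, ∏ j ∈ Finset.Ioi i,
          ((y i - y j) ^ 2 - (ℏ ^ 2 / 4) * (u i - u j) ^ 2) /
            ((y i - y j) ^ 2 - (ℏ ^ 2 / 4) * (u i + u j) ^ 2)) =
      ∑ π ∈ Finset.univ.filter (fun π : Finset (Finset (Fin n)) =>
          (∀ B ∈ π, B.Nonempty) ∧ ∀ i : Fin n, ∃! B, B ∈ π ∧ i ∈ B),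
        ∏ B ∈ π,
          ((-1 : ℂ) ^ (B.card - 1) *
            ∑ σ ∈ Finset.univ.filter (fun σ : Equiv.Perm {x // x ∈ B} =>
                ∀ i j : {x // x ∈ B}, ∃ k : ℕ, (σ ^ k) i = j),
              ∏ i : {x // x ∈ B},
                (y i.1 - y ((σ i) : Fin n) + (ℏ / 2) * (u i.1 + u ((σ i) : Fin n)))⁻¹) := by
  rw [← det_inv_sub_add_mul_add hℏ hu hy]
  -- `using 3`: the outer filters differ in their `Decidable` instance for `∀ i : Fin n`
  -- (`Nat.decidableForallFin` here, `Fintype.decidableForallFintype` in the general lemma).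
  convert Matrix.det_eq_sum_setPartitions_prod_cycles _ using 3

/-- Algebraic core of Proposition 2.9: the Cauchy-determinant product form of the
disconnected x-y duality formula for unramified `y` equals the sum over set partitions
of `{1,…,n}` of cyclic contributions. -/
theorem xy_duality_cauchy_partition_identity (n : ℕ) (hn : 1 ≤ n) (ℏ : ℂ) (hℏ : ℏ ≠ 0)
    (y u : Fin n → ℂ) (hu : ∀ i, u i ≠ 0)
    (hy : ∀ i j : Fin n, i ≠ j → (y i - y j) ^ 2 ≠ (ℏ ^ 2 / 4) * (u i + u j) ^ 2) :
    (∏ i : Fin n, (ℏ * u i)⁻¹) *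
        (∏ i : Fin n, ∏ j ∈ Finset.Ioi i,
          ((y i - y j) ^ 2 - (ℏ ^ 2 / 4) * (u i - u j) ^ 2) /
            ((y i - y j) ^ 2 - (ℏ ^ 2 / 4) * (u i + u j) ^ 2)) =
      ∑ π ∈ Finset.univ.filter (fun π : Finset (Finset (Fin n)) =>
          (∀ B ∈ π, B.Nonempty) ∧ ∀ i : Fin n, ∃! B, B ∈ π ∧ i ∈ B),
        ∏ B ∈ π,
          ((-1 : ℂ) ^ (B.card - 1) *
            ∑ σ ∈ Finset.univ.filter (fun σ : Equiv.Perm {x // x ∈ B} =>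
                ∀ i j : {x // x ∈ B}, ∃ k : ℕ, (σ ^ k) i = j),
              ∏ i : {x // x ∈ B},
                (y i.1 - y ((σ i) : Fin n) + (ℏ / 2) * (u i.1 + u ((σ i) : Fin n)))⁻¹) :=
  xy_duality_cauchy_partition_identity_general n ℏ hℏ y u hu hy
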